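/- arXiv:2503.04319 — 6 statements merged into one kernel-verified Lean document; each statement's English description precedes it below -/
import Mathlib

section
/- Let U = (−1,1), let φ : ℝ → [0,1] be twice continuously differentiable, and let C > 0. Let (λⁿ) be a sequence in L∞(U) with λⁿ ≥ 0 a.e., ∫_U λⁿ = 1 and ‖λⁿ‖_{L∞(U)} ≤ C, and let λ ∈ L∞(U) be such that ∫_U λⁿ ξ → ∫_U λ ξ for every ξ ∈ L¹(U). Define Λⁿ(x) = ∫_U φ(y−x)(y−x) λⁿ(y) dy and (Λⁿ)'(x) = −∫_U (φ'(y−x)(y−x) + φ(y−x)) λⁿ(y) dy, and similarly Λ, Λ' from λ. Then Λⁿ → Λ and (Λⁿ)' → Λ' uniformly on [−1,1], i.e. sup_{x∈[−1,1]}|Λⁿ(x) − Λ(x)| → 0 and sup_{x∈[−1,1]}|(Λⁿ)'(x) − Λ'(x)| → 0. -/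
open MeasureTheory intervalIntegral Filter Set Topology
open scoped NNReal Pointwise Interval

/-!
The kernel `k` (here `r ↦ φ r * r`, resp. `r ↦ φ' r * r + φ r`) is `C¹`, hence Lipschitz on the
compact set of differences `y - x`. Since `‖λⁿ‖∞ ≤ C`, the functions `x ↦ ∫ k (y - x) λⁿ(y) dy` are
then Lipschitz with one constant for all `n`, so they form an equicontinuous family on the compact
interval `[-1, 1]`. Weak* convergence, tested against `k (· - x)`, gives pointwise convergence,
and pointwise convergence of an equicontinuous family on a compact set is uniform (Ascoli).
-/

theorem EquicontinuousOn.tendstoUniformlyOn_of_tendsto {ι X α : Type*} [TopologicalSpace X]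
    [UniformSpace α] {F : ι → X → α} {f : X → α} {K : Set X} {l : Filter ι}
    (hK : IsCompact K) (hF : EquicontinuousOn F K)
    (hlim : ∀ x ∈ K, Tendsto (fun i => F i x) l (𝓝 (f x))) :
    TendstoUniformlyOn F f l K := by
  have : CompactSpace K := isCompact_iff_compactSpace.mp hK
  rw [tendstoUniformlyOn_iff_restrict]
  refine UniformFun.tendsto_iff_tendstoUniformly.mp <|
    ((equicontinuous_restrict_iff F).mpr hF).tendsto_uniformFun_iff_pi l _ |>.mpr ?_
  exact tendsto_pi_nhds.mpr fun x => hlim x x.2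

theorem LipschitzOnWith.intervalIntegral_comp_sub_mul {k ρ : ℝ → ℝ} {a b : ℝ} {s t : Set ℝ}
    {K C : ℝ≥0} (hk : LipschitzOnWith K k t) (hst : ∀ x ∈ s, ∀ y ∈ [[a, b]], y - x ∈ t)
    (hρ : IntervalIntegrable ρ volume a b) (hρC : ∀ᵐ y ∂volume.restrict (Ι a b), ‖ρ y‖ ≤ C) :
    LipschitzOnWith (K * C * nndist a b) (fun x => ∫ y in a..b, k (y - x) * ρ y) s := by
  have hint : ∀ x ∈ s, IntervalIntegrable (fun y => k (y - x) * ρ y) volume a b := fun x hx =>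
    hρ.continuousOn_mul <| hk.continuousOn.comp (by fun_prop) (hst x hx)
  refine LipschitzOnWith.of_dist_le_mul fun x hx x' hx' => ?_
  rw [dist_eq_norm, ← integral_sub (hint x hx) (hint x' hx')]
  refine (norm_integral_le_of_norm_le_const_ae (C := K * dist x x' * C) ?_).trans_eq ?_
  · rw [← ae_restrict_iff' measurableSet_uIoc]
    filter_upwards [hρC, ae_restrict_mem measurableSet_uIoc] with y hyC hy
    have hy' : y ∈ [[a, b]] := uIoc_subset_uIcc hy
    calc ‖k (y - x) * ρ y - k (y - x') * ρ y‖ = dist (k (y - x)) (k (y - x')) * ‖ρ y‖ := by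
          rw [← sub_mul, norm_mul, dist_eq_norm]
      _ ≤ K * dist x x' * C := by
          gcongr
          simpa only [dist_sub_left] using hk.dist_le_mul _ (hst x hx y hy') _ (hst x' hx' y hy')
  · rw [NNReal.coe_mul, NNReal.coe_mul, coe_nndist, dist_comm a b, Real.dist_eq b a]; ring

theorem tendstoUniformlyOn_intervalIntegral_comp_sub_mul {k : ℝ → ℝ} (hk : LocallyLipschitz k)
    {a b : ℝ} {s : Set ℝ} (hs : IsCompact s) {ρ : ℕ → ℝ → ℝ} {ρ₀ : ℝ → ℝ} {C : ℝ≥0}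
    (hρ : ∀ n, IntervalIntegrable (ρ n) volume a b)
    (hρC : ∀ n, ∀ᵐ y ∂volume.restrict (Ι a b), ‖ρ n y‖ ≤ C)
    (hweak : ∀ ξ : ℝ → ℝ, Continuous ξ →
      Tendsto (fun n => ∫ y in a..b, ρ n y * ξ y) atTop (𝓝 (∫ y in a..b, ρ₀ y * ξ y))) :
    TendstoUniformlyOn (fun n x => ∫ y in a..b, k (y - x) * ρ n y)
      (fun x => ∫ y in a..b, k (y - x) * ρ₀ y) atTop s := by
  obtain ⟨K, hK⟩ := hk.locallyLipschitzOn.exists_lipschitzOnWith_of_compact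
    (isCompact_uIcc.add hs.neg)
  have hst : ∀ x ∈ s, ∀ y ∈ [[a, b]], y - x ∈ [[a, b]] + -s := fun x hx y hy =>
    sub_eq_add_neg y x ▸ add_mem_add hy (neg_mem_neg.mpr hx)
  have hequi : EquicontinuousOn (fun n x => ∫ y in a..b, k (y - x) * ρ n y) s :=
    (LipschitzOnWith.uniformEquicontinuousOn _ _ fun n =>
      hK.intervalIntegral_comp_sub_mul hst (hρ n) (hρC n)).equicontinuousOn
  refine hequi.tendstoUniformlyOn_of_tendsto hs fun x _ => ?_
  simpa only [mul_comm (k _)] using hweak (fun y => k (y - x)) (hk.continuous.comp (by fun_prop))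

theorem Lambda_uniform_convergence_of_weakStar_general
    (C : ℝ)
    (φ : ℝ → ℝ) (hφ : ContDiff ℝ 2 φ)
    (lam : ℕ → ℝ → ℝ) (lam₀ : ℝ → ℝ)
    (hlam_meas : ∀ n, Measurable (lam n))
    (hlam_bdd : ∀ n, ∀ᵐ y ∂(volume.restrict (Set.Ioo (-1:ℝ) 1)), |lam n y| ≤ C)
    (hweak : ∀ ξ : ℝ → ℝ, IntegrableOn ξ (Set.Ioo (-1:ℝ) 1) →
      Tendsto (fun n => ∫ y in (-1:ℝ)..1, lam n y * ξ y) atTop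
        (nhds (∫ y in (-1:ℝ)..1, lam₀ y * ξ y))) :
    TendstoUniformlyOn
      (fun n x => ∫ y in (-1:ℝ)..1, φ (y - x) * (y - x) * lam n y)
      (fun x => ∫ y in (-1:ℝ)..1, φ (y - x) * (y - x) * lam₀ y)
      atTop (Set.Icc (-1:ℝ) 1) ∧
    TendstoUniformlyOn
      (fun n x => -(∫ y in (-1:ℝ)..1, (deriv φ (y - x) * (y - x) + φ (y - x)) * lam n y))
      (fun x => -(∫ y in (-1:ℝ)..1, (deriv φ (y - x) * (y - x) + φ (y - x)) * lam₀ y))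
      atTop (Set.Icc (-1:ℝ) 1) := by
  have hbdd : ∀ n, ∀ᵐ y ∂volume.restrict (Ι (-1:ℝ) 1), ‖lam n y‖ ≤ C.toNNReal := fun n => by
    rw [uIoc_of_le (by norm_num), ← Measure.restrict_congr_set Ioo_ae_eq_Ioc]
    filter_upwards [hlam_bdd n] with y hy using hy.trans (Real.le_coe_toNNReal C)
  have hint : ∀ n, IntervalIntegrable (lam n) volume (-1) 1 := fun n => by
    have : IsFiniteMeasure (volume.restrict (Ι (-1:ℝ) 1)) :=
      isFiniteMeasure_restrict.mpr measure_Ioc_lt_top.ne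
    exact intervalIntegrable_iff.mpr <|
      Integrable.of_bound (hlam_meas n).aestronglyMeasurable _ (hbdd n)
  have hconv : ∀ ξ : ℝ → ℝ, Continuous ξ → Tendsto (fun n => ∫ y in (-1:ℝ)..1, lam n y * ξ y)
      atTop (𝓝 (∫ y in (-1:ℝ)..1, lam₀ y * ξ y)) := fun ξ hξ =>
    hweak ξ (hξ.integrableOn_Icc.mono_set Ioo_subset_Icc_self)
  have key : ∀ k : ℝ → ℝ, ContDiff ℝ 1 k → TendstoUniformlyOn
      (fun n x => ∫ y in (-1:ℝ)..1, k (y - x) * lam n y)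
      (fun x => ∫ y in (-1:ℝ)..1, k (y - x) * lam₀ y) atTop (Icc (-1) 1) := fun k hk =>
    tendstoUniformlyOn_intervalIntegral_comp_sub_mul hk.locallyLipschitz isCompact_Icc hint hbdd
      hconv
  have hφ₁ : ContDiff ℝ 1 φ := hφ.of_le one_le_two
  have hφ' : ContDiff ℝ 1 (deriv φ) := hφ.deriv' (n := 1)
  exact ⟨key _ (hφ₁.mul contDiff_id),
    uniformContinuous_neg.comp_tendstoUniformlyOn (key _ ((hφ'.mul contDiff_id).add hφ₁))⟩

/-- weak* convergence of λⁿ implies uniform convergence of Λⁿ and (Λⁿ)'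
on [−1,1]. -/
theorem Lambda_uniform_convergence_of_weakStar
    (C : ℝ) (hC : 0 < C)
    (φ : ℝ → ℝ) (hφ : ContDiff ℝ 2 φ) (hφ01 : ∀ r, φ r ∈ Set.Icc (0:ℝ) 1)
    (lam : ℕ → ℝ → ℝ) (lam₀ : ℝ → ℝ)
    (hlam_meas : ∀ n, Measurable (lam n)) (hlam₀_meas : Measurable lam₀)
    (hlam_nonneg : ∀ n, ∀ᵐ y ∂(volume.restrict (Set.Ioo (-1:ℝ) 1)), 0 ≤ lam n y)
    (hlam_mass : ∀ n, ∫ y in (-1:ℝ)..1, lam n y = 1)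
    (hlam_bdd : ∀ n, ∀ᵐ y ∂(volume.restrict (Set.Ioo (-1:ℝ) 1)), |lam n y| ≤ C)
    (hlam₀_bdd : MemLp lam₀ ⊤ (volume.restrict (Set.Ioo (-1:ℝ) 1)))
    (hweak : ∀ ξ : ℝ → ℝ, IntegrableOn ξ (Set.Ioo (-1:ℝ) 1) →
      Tendsto (fun n => ∫ y in (-1:ℝ)..1, lam n y * ξ y) atTop
        (nhds (∫ y in (-1:ℝ)..1, lam₀ y * ξ y))) :
    TendstoUniformlyOn
      (fun n x => ∫ y in (-1:ℝ)..1, φ (y - x) * (y - x) * lam n y)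
      (fun x => ∫ y in (-1:ℝ)..1, φ (y - x) * (y - x) * lam₀ y)
      atTop (Set.Icc (-1:ℝ) 1) ∧
    TendstoUniformlyOn
      (fun n x => -(∫ y in (-1:ℝ)..1, (deriv φ (y - x) * (y - x) + φ (y - x)) * lam n y))
      (fun x => -(∫ y in (-1:ℝ)..1, (deriv φ (y - x) * (y - x) + φ (y - x)) * lam₀ y))
      atTop (Set.Icc (-1:ℝ) 1) :=
  Lambda_uniform_convergence_of_weakStar_general C φ hφ lam lam₀ hlam_meas hlam_bdd hweak
end

section
/- There exists a constant c > 0 such that for every continuously differentiable function v : [−1,1] → ℝ, sup_{x ∈ [−1,1]} |v(x)| ≤ c · ( ∫_{−1}^{1} v(x)² dx )^{1/4} · ( ∫_{−1}^{1} ( v(x)² + v'(x)² ) dx )^{1/4}; that is, ‖v‖_{L∞} ≤ c ‖v‖_{L²}^{1/2} ‖v‖_{H¹}^{1/2} on the bounded interval (−1,1). -/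
/-!
For `x, y ∈ [a, b]` the fundamental theorem of calculus gives
`v x ^ 2 - v y ^ 2 = ∫ y..x, 2 v v'`, so `v x ^ 2 ≤ v y ^ 2 + 2 ∫ a..b, |v| |v'|`.
Averaging over `y` and applying Cauchy–Schwarz to `∫ |v| |v'|` yields
`v x ^ 2 ≤ ((b - a)⁻¹ + 2) ‖v‖_{L²} ‖v‖_{H¹}`; on `[-1, 1]` the factor is
`5/2 ≤ 2 ^ 2`.
-/

open MeasureTheory intervalIntegral Set

theorem integral_abs_mul_abs_le_sqrt_mul_sqrt {α : Type*} [MeasurableSpace α] {μ : Measure α}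
    {f g : α → ℝ} (hf : MemLp f 2 μ) (hg : MemLp g 2 μ) :
    ∫ x, |f x| * |g x| ∂μ ≤ √(∫ x, f x ^ 2 ∂μ) * √(∫ x, g x ^ 2 ∂μ) := by
  have holder := integral_mul_le_Lp_mul_Lq_of_nonneg Real.HolderConjugate.two_two
    (ae_of_all μ fun x => abs_nonneg (f x)) (ae_of_all μ fun x => abs_nonneg (g x))
    (by rw [ENNReal.ofReal_ofNat]; exact hf.abs) (by rw [ENNReal.ofReal_ofNat]; exact hg.abs)
  simpa only [Real.rpow_two, sq_abs, ← Real.sqrt_eq_rpow] using holder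

theorem integral_abs_mul_abs_le_sqrt_mul_sqrt_of_continuousOn {f g : ℝ → ℝ} {a b : ℝ}
    (hab : a ≤ b) (hf : ContinuousOn f (Icc a b)) (hg : ContinuousOn g (Icc a b)) :
    ∫ t in a..b, |f t| * |g t| ≤ √(∫ t in a..b, f t ^ 2) * √(∫ t in a..b, g t ^ 2) := by
  have memLp {h : ℝ → ℝ} (hh : ContinuousOn h (Icc a b)) :
      MemLp h 2 (volume.restrict (Ioc a b)) :=
    (memLp_two_iff_integrable_sq
      ((hh.mono Ioc_subset_Icc_self).aestronglyMeasurable measurableSet_Ioc)).2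
      ((hh.pow 2).intervalIntegrable_of_Icc hab).1
  simp only [integral_of_le hab]
  exact integral_abs_mul_abs_le_sqrt_mul_sqrt (memLp hf) (memLp hg)

theorem abs_integral_le_integral_abs_of_mem_Icc {f : ℝ → ℝ} {a b x y : ℝ} (hab : a ≤ b)
    (hx : x ∈ Icc a b) (hy : y ∈ Icc a b) (hf : IntervalIntegrable f volume a b) :
    |∫ t in y..x, f t| ≤ ∫ t in a..b, |f t| := by
  have hsub : uIoc y x ⊆ uIoc a b := uIoc_subset_uIoc_of_uIcc_subset_uIcc
    ((uIcc_subset_Icc hy hx).trans_eq (uIcc_of_le hab).symm)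
  calc |∫ t in y..x, f t| ≤ |(∫ t in y..x, |f t|)| :=
      norm_integral_le_abs_integral_norm (f := f)
    _ ≤ |(∫ t in a..b, |f t|)| :=
      abs_integral_mono_interval hsub (ae_of_all _ fun t => abs_nonneg (f t)) hf.abs
    _ = ∫ t in a..b, |f t| := abs_of_nonneg (integral_nonneg hab fun t _ => abs_nonneg (f t))

namespace ContDiffOn

variable {a b : ℝ} {v : ℝ → ℝ}

theorem integral_two_mul_derivWithin_eq_sq_sub_sq (hv : ContDiffOn ℝ 1 v (Icc a b))
    (hab : a < b) {x y : ℝ} (hx : x ∈ Icc a b) (hy : y ∈ Icc a b) :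
    ∫ t in y..x, 2 * v t * derivWithin v (Icc a b) t = v x ^ 2 - v y ^ 2 := by
  have hsub : uIcc y x ⊆ Icc a b := uIcc_subset_Icc hy hx
  have hv' := hv.continuousOn_derivWithin (uniqueDiffOn_Icc hab) le_rfl
  refine integral_eq_sub_of_hasDeriv_right ((hv.continuousOn.mono hsub).pow 2) (fun t ht => ?_)
    (((continuousOn_const.mul hv.continuousOn).mul hv').mono hsub).intervalIntegrable
  have ht' : t ∈ Ioo a b := Ioo_subset_Ioo (le_min hy.1 hx.1) (max_le hy.2 hx.2) ht
  have hvt : HasDerivAt v (derivWithin v (Icc a b) t) t :=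
    (hv.differentiableOn one_ne_zero t (Ioo_subset_Icc_self ht')).hasDerivWithinAt.hasDerivAt
      (Icc_mem_nhds ht'.1 ht'.2)
  convert (hvt.pow 2).hasDerivWithinAt using 1
  ring

theorem sq_le_sq_add_two_mul_integral (hv : ContDiffOn ℝ 1 v (Icc a b)) (hab : a < b)
    {x y : ℝ} (hx : x ∈ Icc a b) (hy : y ∈ Icc a b) :
    v x ^ 2 ≤ v y ^ 2 + 2 * ∫ t in a..b, |v t| * |derivWithin v (Icc a b) t| := by
  have hv' := hv.continuousOn_derivWithin (uniqueDiffOn_Icc hab) le_rfl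
  have hbound := abs_integral_le_integral_abs_of_mem_Icc
    (f := fun t => 2 * v t * derivWithin v (Icc a b) t) hab.le hx hy
    (((continuousOn_const.mul hv.continuousOn).mul hv').intervalIntegrable_of_Icc hab.le)
  rw [integral_two_mul_derivWithin_eq_sq_sub_sq hv hab hx hy] at hbound
  simp only [abs_mul, abs_two, mul_assoc, intervalIntegral.integral_const_mul] at hbound
  linarith [le_abs_self (v x ^ 2 - v y ^ 2)]

theorem mul_sq_le_integral_sq_add (hv : ContDiffOn ℝ 1 v (Icc a b)) (hab : a < b)
    {x : ℝ} (hx : x ∈ Icc a b) :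
    (b - a) * v x ^ 2 ≤ (∫ t in a..b, v t ^ 2) +
      (b - a) * (2 * ∫ t in a..b, |v t| * |derivWithin v (Icc a b) t|) := by
  have hv2 : IntervalIntegrable (fun t => v t ^ 2) volume a b :=
    (hv.continuousOn.pow 2).intervalIntegrable_of_Icc hab.le
  have hmono := integral_mono_on hab.le intervalIntegrable_const
    (hv2.add intervalIntegrable_const) fun y hy => sq_le_sq_add_two_mul_integral hv hab hx hy
  simpa only [intervalIntegral.integral_const, integral_add hv2 intervalIntegrable_const,
    smul_eq_mul] using hmono

theorem sq_le_integral_sq_div_add_two_mul_sqrt_mul_sqrt (hv : ContDiffOn ℝ 1 v (Icc a b))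
    (hab : a < b) {x : ℝ} (hx : x ∈ Icc a b) :
    v x ^ 2 ≤ (∫ t in a..b, v t ^ 2) / (b - a) +
      2 * (√(∫ t in a..b, v t ^ 2) * √(∫ t in a..b, derivWithin v (Icc a b) t ^ 2)) := by
  have hcs := integral_abs_mul_abs_le_sqrt_mul_sqrt_of_continuousOn hab.le hv.continuousOn
    (hv.continuousOn_derivWithin (uniqueDiffOn_Icc hab) le_rfl)
  have hba : 0 < b - a := sub_pos.2 hab
  rw [div_add' _ _ _ hba.ne', le_div_iff₀' hba]
  linarith [mul_sq_le_integral_sq_add hv hab hx, mul_le_mul_of_nonneg_left hcs hba.le]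

theorem sq_le_mul_sqrt_integral_sq_mul_sqrt_integral_sq_add_sq (hv : ContDiffOn ℝ 1 v (Icc a b))
    (hab : a < b) {x : ℝ} (hx : x ∈ Icc a b) :
    v x ^ 2 ≤ ((b - a)⁻¹ + 2) * (√(∫ t in a..b, v t ^ 2) *
      √(∫ t in a..b, (v t ^ 2 + derivWithin v (Icc a b) t ^ 2))) := by
  have hv2 : IntervalIntegrable (fun t => v t ^ 2) volume a b :=
    (hv.continuousOn.pow 2).intervalIntegrable_of_Icc hab.le
  have hw2 : IntervalIntegrable (fun t => derivWithin v (Icc a b) t ^ 2) volume a b :=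
    ((hv.continuousOn_derivWithin (uniqueDiffOn_Icc hab) le_rfl).pow 2).intervalIntegrable_of_Icc
      hab.le
  rw [integral_add hv2 hw2]
  set A := ∫ t in a..b, v t ^ 2
  set C := ∫ t in a..b, derivWithin v (Icc a b) t ^ 2
  have hA : 0 ≤ A := integral_nonneg hab.le fun t _ => sq_nonneg _
  have hC : 0 ≤ C := integral_nonneg hab.le fun t _ => sq_nonneg _
  have hAB : A ≤ √A * √(A + C) := by
    conv_lhs => rw [← Real.mul_self_sqrt hA]
    gcongr
    linarith
  have hCB : √C ≤ √(A + C) := Real.sqrt_le_sqrt (by linarith)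
  calc v x ^ 2 ≤ A / (b - a) + 2 * (√A * √C) :=
        sq_le_integral_sq_div_add_two_mul_sqrt_mul_sqrt hv hab hx
    _ ≤ (√A * √(A + C)) / (b - a) + 2 * (√A * √(A + C)) := by gcongr
    _ = ((b - a)⁻¹ + 2) * (√A * √(A + C)) := by ring

end ContDiffOn

/-- one-dimensional Gagliardo–Nirenberg interpolation inequality
‖v‖_{L∞} ≤ c ‖v‖_{L²}^{1/2} ‖v‖_{H¹}^{1/2} on the interval (−1,1). -/
theorem gagliardo_nirenberg_interval :
    ∃ c : ℝ, 0 < c ∧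
      ∀ v : ℝ → ℝ, ContDiffOn ℝ 1 v (Set.Icc (-1:ℝ) 1) →
        ∀ x ∈ Set.Icc (-1:ℝ) 1,
          |v x| ≤ c * (∫ t in (-1:ℝ)..1, (v t) ^ 2) ^ ((1:ℝ)/4) *
            (∫ t in (-1:ℝ)..1,
              ((v t) ^ 2 + (derivWithin v (Set.Icc (-1:ℝ) 1) t) ^ 2)) ^ ((1:ℝ)/4) := by
  have rpow_quarter_sq {s : ℝ} (hs : 0 ≤ s) : (s ^ (1 / 4 : ℝ)) ^ 2 = √s := by
    rw [← Real.rpow_mul_natCast hs, Real.sqrt_eq_rpow]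
    norm_num
  refine ⟨2, two_pos, fun v hv x hx => ?_⟩
  set A := ∫ t in (-1:ℝ)..1, v t ^ 2
  set B := ∫ t in (-1:ℝ)..1, (v t ^ 2 + derivWithin v (Set.Icc (-1:ℝ) 1) t ^ 2)
  have hA : 0 ≤ A := integral_nonneg (by norm_num) fun t _ => sq_nonneg _
  have hB : 0 ≤ B := integral_nonneg (by norm_num) fun t _ => by positivity
  refine abs_le_of_sq_le_sq ?_ (by positivity)
  rw [mul_pow, mul_pow, rpow_quarter_sq hA, rpow_quarter_sq hB, mul_assoc]
  calc v x ^ 2 ≤ ((1 - -1)⁻¹ + 2) * (√A * √B) :=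
        hv.sq_le_mul_sqrt_integral_sq_mul_sqrt_integral_sq_add_sq (by norm_num) hx
    _ ≤ 2 ^ 2 * (√A * √B) := by gcongr; norm_num
end

section
/- Let U = (−1,1), A > 0, τ > 0, σ ∈ ℝ, let φ : ℝ → [0,1] be twice continuously differentiable, and let M : [0,A]² → ℝ be continuous with ∫_0^A M(a,b) db = 1 for every a ∈ [0,A]. Suppose μ : [−1,1] → ℝ is twice continuously differentiable with ∫_{−1}^{1} μ(x) dx = 1 and satisfies, for all x ∈ (−1,1), d/dx ( μ(x) ∫_{−1}^{1} φ(y−x)(y−x) μ(y) dy ) − (σ²/2) μ''(x) = 0. Define ρ*(a,x) = μ(x) for all a ∈ [0,A], x ∈ [−1,1]. Then ρ* satisfies the age-structured steady state equation: for all (a,x) ∈ (0,A)×(−1,1), τ ∂_a ρ*(a,x) + ∂_x ( ρ*(a,x) ∫_{−1}^{1} ∫_0^A M(a,b) φ(y−x)(y−x) ρ*(b,y) db dy ) − (σ²/2) ∂_{xx} ρ*(a,x) = 0, and the age-zero condition ρ*(0,x) = μ(x) ∫_{−1}^{1} ρ*(A,y) dy holds. -/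
open MeasureTheory intervalIntegral

/-- if the age-zero distribution μ is a steady state of the classical
mean-field equation, then ρ*(a,x) = μ(x) is a steady state of the age-structured
model. -/
theorem stationary_age_zero_density_gives_steady_state
    (A τ σ : ℝ) (hA : 0 < A) (hτ : 0 < τ)
    (φ : ℝ → ℝ) (hφ : ContDiff ℝ 2 φ) (hφ01 : ∀ r, φ r ∈ Set.Icc (0:ℝ) 1)
    (M : ℝ → ℝ → ℝ)
    (hM_cont : ContinuousOn (fun p : ℝ × ℝ => M p.1 p.2)
      (Set.Icc 0 A ×ˢ Set.Icc 0 A))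
    (hM_mass : ∀ a ∈ Set.Icc (0:ℝ) A, ∫ b in (0:ℝ)..A, M a b = 1)
    (μ : ℝ → ℝ) (hμ : ContDiff ℝ 2 μ)
    (hμ_mass : ∫ x in (-1:ℝ)..1, μ x = 1)
    (hμ_steady : ∀ x ∈ Set.Ioo (-1:ℝ) 1,
      deriv (fun z => μ z * ∫ y in (-1:ℝ)..1, φ (y - z) * (y - z) * μ y) x -
        σ ^ 2 / 2 * deriv (deriv μ) x = 0)
    (ρstar : ℝ → ℝ → ℝ) (hρstar : ∀ a x, ρstar a x = μ x) :
    (∀ a ∈ Set.Ioo (0:ℝ) A, ∀ x ∈ Set.Ioo (-1:ℝ) 1,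
      τ * deriv (fun a' => ρstar a' x) a +
        deriv (fun z => ρstar a z *
          ∫ y in (-1:ℝ)..1, ∫ b in (0:ℝ)..A,
            M a b * (φ (y - z) * (y - z)) * ρstar b y) x -
        σ ^ 2 / 2 * deriv (deriv (fun z => ρstar a z)) x = 0) ∧
    (∀ x : ℝ, ρstar 0 x = μ x * ∫ y in (-1:ℝ)..1, ρstar A y) := by
  constructor
  · intro a ha x hx
    have hconst : (fun a' => ρstar a' x) = fun _ => μ x := funext fun a' => hρstar a' x
    have hμfun : (fun z => ρstar a z) = μ := funext fun z => hρstar a z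
    have hrw : (fun z => ρstar a z *
        ∫ y in (-1:ℝ)..1, ∫ b in (0:ℝ)..A,
          M a b * (φ (y - z) * (y - z)) * ρstar b y)
        = fun z => μ z * ∫ y in (-1:ℝ)..1, φ (y - z) * (y - z) * μ y := by
      funext z
      rw [hρstar]
      congr 1
      apply intervalIntegral.integral_congr
      intro y _
      simp only [hρstar]
      have h1 : ∀ b : ℝ, M a b * (φ (y - z) * (y - z)) * μ y
          = M a b * (φ (y - z) * (y - z) * μ y) := by
        intro b; ring
      simp only [h1]
      rw [intervalIntegral.integral_mul_const,
        hM_mass a ⟨le_of_lt ha.1, le_of_lt ha.2⟩, one_mul]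
    rw [hconst, hμfun, hrw, deriv_const, mul_zero, zero_add]
    exact hμ_steady x hx
  · intro x
    have : (fun y => ρstar A y) = μ := funext fun y => hρstar A y
    rw [hρstar]
    simp only [hρstar, hμ_mass, mul_one]
end

section
/- Let U = (−1,1), A > 0, τ > 0, σ ∈ ℝ, φ : ℝ → ℝ continuous, M : [0,A]² → ℝ continuous, and let μ : [−1,1] → ℝ be integrable with ∫_{−1}^{1} μ(x) dx = 1. Let ρ : [0,T]×[0,A]×[−1,1] → ℝ be continuous with continuous partial derivatives ∂_t ρ, ∂_a ρ, ∂_x ρ, ∂_{xx} ρ, satisfying pointwise ∂_t ρ + τ ∂_a ρ + ∂_x F[ρ] = 0 with flux F[ρ](t,a,x) = ρ(t,a,x) ∫_{−1}^{1} ∫_0^A M(a,b) φ(y−x)(y−x) ρ(t,b,y) db dy − (σ²/2) ∂_x ρ(t,a,x), the no-flux conditions F[ρ](t,a,±1) = 0, and the age-zero condition ρ(t,0,x) = μ(x) ∫_{−1}^{1} ρ(t,A,y) dy. Then the total mass ∫_0^A ∫_{−1}^{1} ρ(t,a,x) dx da is constant in t. -/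
/-!
Differentiate the total mass in time and substitute the equation. For each age, the `x`-integral of
`∂ₓF` is `F(1) - F(-1) = 0` by the no-flux condition; the age-transport term then integrates to
`τ (∫ ρ(t,A,·) - ∫ ρ(t,0,·))`, which vanishes because newborns are distributed by `μ` of unit mass.
The delicate point is that `F` is differentiable in `x` although `φ` is only continuous: this is
obtained by integrating the interaction term by parts against a primitive of `u ↦ φ u * u`.
-/

open MeasureTheory intervalIntegral Set Function

theorem eq_of_hasDerivAt_eq_zero_on_Ioo {f f' : ℝ → ℝ} {a b s t : ℝ}
    (hf : ∀ x, HasDerivAt f (f' x) x) (hf' : ∀ x ∈ Ioo a b, f' x = 0)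
    (hs : s ∈ Icc a b) (ht : t ∈ Icc a b) : f s = f t := by
  have hcont : ContinuousOn f (Icc a b) := fun x _ => (hf x).continuousAt.continuousWithinAt
  have hderiv : ∀ x ∈ interior (Icc a b), HasDerivWithinAt f (f' x) (interior (Icc a b)) x :=
    fun x _ => (hf x).hasDerivWithinAt
  have hzero : ∀ x ∈ interior (Icc a b), f' x = 0 := by
    rw [interior_Icc]; exact hf'
  have hmono := monotoneOn_of_hasDerivWithinAt_nonneg (convex_Icc a b) hcont hderiv
    fun x hx => (hzero x hx).ge
  have hanti := antitoneOn_of_hasDerivWithinAt_nonpos (convex_Icc a b) hcont hderiv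
    fun x hx => (hzero x hx).le
  rcases le_total s t with hst | hts
  · exact le_antisymm (hmono hs ht hst) (hanti hs ht hst)
  · exact le_antisymm (hanti ht hs hts) (hmono ht hs hts)

theorem hasDerivAt_intervalIntegral_of_continuous_partialDeriv {f f' : ℝ → ℝ → ℝ} {a b : ℝ}
    (hf : ∀ x, Continuous (f x)) (hf' : Continuous (uncurry f'))
    (hderiv : ∀ x y, HasDerivAt (fun x => f x y) (f' x y) x) (x₀ : ℝ) :
    HasDerivAt (fun x => ∫ y in a..b, f x y) (∫ y in a..b, f' x₀ y) x₀ := by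
  obtain ⟨C, hC⟩ := ((isCompact_closedBall x₀ 1).prod isCompact_uIcc).exists_bound_of_continuousOn
    hf'.continuousOn
  refine (hasDerivAt_integral_of_dominated_loc_of_deriv_le (bound := fun _ => C)
    (Metric.closedBall_mem_nhds x₀ one_pos) (.of_forall fun x => (hf x).aestronglyMeasurable)
    ((hf x₀).intervalIntegrable a b) (hf'.comp (Continuous.prodMk_right x₀)).aestronglyMeasurable
    ?_ intervalIntegrable_const (.of_forall fun y _ x _ => hderiv x y)).2
  exact .of_forall fun y hy x hx => hC (x, y) ⟨hx, uIoc_subset_uIcc hy⟩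

theorem hasDerivAt_intervalIntegral_intervalIntegral {u u' : ℝ → ℝ → ℝ → ℝ} {a b c d : ℝ}
    (hu : Continuous fun p : ℝ × ℝ × ℝ => u p.1 p.2.1 p.2.2)
    (hu' : Continuous fun p : ℝ × ℝ × ℝ => u' p.1 p.2.1 p.2.2)
    (hderiv : ∀ s y z, HasDerivAt (fun s => u s y z) (u' s y z) s) (s₀ : ℝ) :
    HasDerivAt (fun s => ∫ y in a..b, ∫ z in c..d, u s y z)
      (∫ y in a..b, ∫ z in c..d, u' s₀ y z) s₀ := by
  have hinner : ∀ s y, HasDerivAt (fun s => ∫ z in c..d, u s y z) (∫ z in c..d, u' s y z) s :=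
    fun s y => hasDerivAt_intervalIntegral_of_continuous_partialDeriv (f' := fun s z => u' s y z)
      (fun s => hu.comp₃ continuous_const continuous_const continuous_id)
      (hu'.comp₃ continuous_fst continuous_const continuous_snd) (fun s z => hderiv s y z) s
  exact hasDerivAt_intervalIntegral_of_continuous_partialDeriv
    (f' := fun s y => ∫ z in c..d, u' s y z)
    (fun s => continuous_parametric_intervalIntegral_of_continuous'
      (hu.comp₃ continuous_const continuous_fst continuous_snd) c d)
    (continuous_parametric_intervalIntegral_of_continuous'
      (f := fun (p : ℝ × ℝ) z => u' p.1 p.2 z)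
      (hu'.comp₃ (continuous_fst.comp continuous_fst) (continuous_snd.comp continuous_fst)
        continuous_snd) c d)
    hinner s₀

theorem intervalIntegral_intervalIntegral_partialDeriv_eq_sub {u u' : ℝ → ℝ → ℝ} {a b c d : ℝ}
    (hu : Continuous (uncurry u)) (hu' : Continuous (uncurry u'))
    (hderiv : ∀ y z, HasDerivAt (fun y => u y z) (u' y z) y) :
    ∫ y in a..b, ∫ z in c..d, u' y z = (∫ z in c..d, u b z) - ∫ z in c..d, u a z :=
  integral_eq_sub_of_hasDerivAt
    (fun y _ => hasDerivAt_intervalIntegral_of_continuous_partialDeriv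
      (fun y => hu.comp (Continuous.prodMk_right y)) hu' hderiv y)
    ((continuous_parametric_intervalIntegral_of_continuous' hu' c d).intervalIntegrable a b)

theorem differentiable_intervalIntegral_mul_comp_sub {g g' ψ : ℝ → ℝ} {a b : ℝ}
    (hg : ∀ y, HasDerivAt g (g' y) y) (hg' : Continuous g') (hψ : Continuous ψ) :
    Differentiable ℝ fun x => ∫ y in a..b, g y * ψ (y - x) := by
  set Ψ : ℝ → ℝ := fun u => ∫ v in (0:ℝ)..u, ψ v
  have hΨ : ∀ u, HasDerivAt Ψ (ψ u) u := fun u => (hψ.integral_hasStrictDerivAt 0 u).hasDerivAt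
  have hΨ_shift : ∀ x y, HasDerivAt (fun y => Ψ (y - x)) (ψ (y - x)) y := fun x y => by
    simpa using (hΨ (y - x)).comp_sub_const y x
  have hΨ_cont : Continuous Ψ := continuous_iff_continuousAt.2 fun u => (hΨ u).continuousAt
  have hparts : (fun x => ∫ y in a..b, g y * ψ (y - x)) =
      fun x => g b * Ψ (b - x) - g a * Ψ (a - x) - ∫ y in a..b, g' y * Ψ (y - x) :=
    funext fun x => integral_mul_deriv_eq_deriv_mul_of_hasDerivAt
      (fun y _ => (hg y).continuousAt.continuousWithinAt)
      (fun y _ => (hΨ_shift x y).continuousAt.continuousWithinAt)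
      (fun y _ => hg y) (fun y _ => hΨ_shift x y)
      (hg'.intervalIntegrable a b) ((hψ.comp (continuous_sub_right x)).intervalIntegrable a b)
  have hΨ_sub : ∀ y x, HasDerivAt (fun x => Ψ (y - x)) (-ψ (y - x)) x := fun y x => by
    simpa using (hΨ (y - x)).comp_const_sub y x
  rw [hparts]
  intro x
  refine ((((hΨ_sub b x).differentiableAt.const_mul _).sub
    ((hΨ_sub a x).differentiableAt.const_mul _)).sub ?_)
  exact (hasDerivAt_intervalIntegral_of_continuous_partialDeriv
    (f' := fun x y => g' y * -ψ (y - x))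
    (fun x => hg'.mul (hΨ_cont.comp (continuous_sub_right x))) (by fun_prop)
    (fun x y => (hΨ_sub y x).const_mul (g' y)) x).differentiableAt

theorem differentiable_intervalIntegral_intervalIntegral_kernel {k ψ : ℝ → ℝ}
    {v v' : ℝ → ℝ → ℝ} {a b c d : ℝ} (hk : ContinuousOn k (uIcc c d)) (hψ : Continuous ψ)
    (hv : Continuous (uncurry v)) (hv' : Continuous (uncurry v'))
    (hderiv : ∀ z y, HasDerivAt (v z) (v' z y) y) :
    Differentiable ℝ fun x => ∫ y in a..b, ∫ z in c..d, k z * ψ (y - x) * v z y := by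
  -- Only the values of `k` on `[[c, d]]` matter; extend them continuously to all of `ℝ`.
  set kₑ : ℝ → ℝ := IccExtend inf_le_sup ((uIcc c d).domRestrict k)
  have hkₑ : Continuous kₑ := hk.domRestrict.Icc_extend'
  have hkₑ_eq : ∀ z ∈ uIcc c d, kₑ z = k z := fun z hz => IccExtend_of_mem _ _ hz
  have hg := hasDerivAt_intervalIntegral_of_continuous_partialDeriv (a := c) (b := d)
    (f := fun y z => kₑ z * v z y) (f' := fun y z => kₑ z * v' z y)
    (fun y => hkₑ.mul (hv.comp (Continuous.prodMk_left y)))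
    ((hkₑ.comp continuous_snd).mul (hv'.comp continuous_swap))
    (fun y z => (hderiv z y).const_mul _)
  have hg' : Continuous fun y => ∫ z in c..d, kₑ z * v' z y :=
    continuous_parametric_intervalIntegral_of_continuous'
      ((hkₑ.comp continuous_snd).mul (hv'.comp continuous_swap)) c d
  have hfactor : (fun x => ∫ y in a..b, ∫ z in c..d, k z * ψ (y - x) * v z y) =
      fun x => ∫ y in a..b, (∫ z in c..d, kₑ z * v z y) * ψ (y - x) :=
    funext fun x => integral_congr fun y _ => by
      rw [← intervalIntegral.integral_mul_const]
      exact integral_congr fun z hz => by rw [hkₑ_eq z hz]; ring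
  rw [hfactor]
  exact differentiable_intervalIntegral_mul_comp_sub hg hg' hψ

theorem integral_timeDeriv_eq_neg_mul_integral_ageDeriv {T A τ σ : ℝ} (hA : 0 ≤ A)
    {φ : ℝ → ℝ} (hφ : Continuous φ) {M : ℝ → ℝ → ℝ}
    (hM_cont : ContinuousOn (fun p : ℝ × ℝ => M p.1 p.2) (Icc 0 A ×ˢ Icc 0 A))
    {ρ : ℝ → ℝ → ℝ → ℝ} (hρ_cont : Continuous fun p : ℝ × ℝ × ℝ => ρ p.1 p.2.1 p.2.2)
    (hρ_x : ∀ t a x, DifferentiableAt ℝ (fun z => ρ t a z) x)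
    (hρ_xx : ∀ t a x, DifferentiableAt ℝ (deriv (fun z => ρ t a z)) x)
    (hρ_t_cont : Continuous fun p : ℝ × ℝ × ℝ => deriv (fun s => ρ s p.2.1 p.2.2) p.1)
    (hρ_a_cont : Continuous fun p : ℝ × ℝ × ℝ => deriv (fun b => ρ p.1 b p.2.2) p.2.1)
    (hρ_x_cont : Continuous fun p : ℝ × ℝ × ℝ => deriv (fun z => ρ p.1 p.2.1 z) p.2.2)
    {F : ℝ → ℝ → ℝ → ℝ}
    (hF : ∀ t a x, F t a x = ρ t a x *
        (∫ y in (-1:ℝ)..1, ∫ b in (0:ℝ)..A, M a b * (φ (y - x) * (y - x)) * ρ t b y) -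
      σ ^ 2 / 2 * deriv (fun z => ρ t a z) x)
    (hPDE : ∀ t ∈ Ioo (0:ℝ) T, ∀ a ∈ Ioo (0:ℝ) A, ∀ x ∈ Ioo (-1:ℝ) 1,
      deriv (fun s => ρ s a x) t + τ * deriv (fun b => ρ t b x) a +
        deriv (fun z => F t a z) x = 0)
    (hNoFlux : ∀ t ∈ Icc (0:ℝ) T, ∀ a ∈ Icc (0:ℝ) A, F t a (-1) = 0 ∧ F t a 1 = 0)
    {t a : ℝ} (ht : t ∈ Ioo 0 T) (ha : a ∈ Ioo 0 A) :
    ∫ x in (-1:ℝ)..1, deriv (fun s => ρ s a x) t =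
      -τ * ∫ x in (-1:ℝ)..1, deriv (fun b => ρ t b x) a := by
  have hM_row : ContinuousOn (M a) (uIcc 0 A) := by
    rw [uIcc_of_le hA]
    exact hM_cont.comp (Continuous.prodMk_right a).continuousOn
      fun b hb => ⟨Ioo_subset_Icc_self ha, hb⟩
  have hinteraction := differentiable_intervalIntegral_intervalIntegral_kernel (a := -1) (b := 1)
    (ψ := fun u => φ u * u) (v := fun b y => ρ t b y) (v' := fun b y => deriv (ρ t b) y)
    hM_row (hφ.mul continuous_id) (hρ_cont.comp₃ continuous_const continuous_fst continuous_snd)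
    (hρ_x_cont.comp₃ continuous_const continuous_fst continuous_snd)
    (fun b y => (hρ_x t b y).hasDerivAt)
  have hflux : Differentiable ℝ (F t a) := by
    rw [funext (hF t a)]
    exact fun x => ((hρ_x t a x).mul (hinteraction x)).sub ((hρ_xx t a x).const_mul _)
  have hρ_t_x : Continuous fun x => deriv (fun s => ρ s a x) t :=
    hρ_t_cont.comp₃ continuous_const continuous_const continuous_id
  have hρ_a_x : Continuous fun x => τ * deriv (fun b => ρ t b x) a :=
    continuous_const.mul (hρ_a_cont.comp₃ continuous_const continuous_const continuous_id)
  have hsource := (hρ_t_x.add hρ_a_x).neg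
  have hbalance := integral_eq_sub_of_hasDerivAt_of_le (by norm_num) hflux.continuous.continuousOn
    (fun x hx => (hflux x).hasDerivAt.congr_deriv
      (eq_neg_of_add_eq_zero_right (hPDE t ht a ha x hx)))
    (hsource.intervalIntegrable (-1) 1)
  obtain ⟨hleft, hright⟩ := hNoFlux t (Ioo_subset_Icc_self ht) a (Ioo_subset_Icc_self ha)
  rw [hleft, hright, sub_zero, intervalIntegral.integral_neg, neg_eq_zero,
    integral_add (hρ_t_x.intervalIntegrable _ _) (hρ_a_x.intervalIntegrable _ _),
    intervalIntegral.integral_const_mul] at hbalance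
  linarith

theorem integral_integral_timeDeriv_eq_zero {T A τ σ : ℝ} (hA : 0 ≤ A)
    {φ : ℝ → ℝ} (hφ : Continuous φ) {M : ℝ → ℝ → ℝ}
    (hM_cont : ContinuousOn (fun p : ℝ × ℝ => M p.1 p.2) (Icc 0 A ×ˢ Icc 0 A))
    {μ : ℝ → ℝ} (hμ_mass : ∫ x in (-1:ℝ)..1, μ x = 1)
    {ρ : ℝ → ℝ → ℝ → ℝ} (hρ_cont : Continuous fun p : ℝ × ℝ × ℝ => ρ p.1 p.2.1 p.2.2)
    (hρ_a : ∀ t a x, DifferentiableAt ℝ (fun b => ρ t b x) a)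
    (hρ_x : ∀ t a x, DifferentiableAt ℝ (fun z => ρ t a z) x)
    (hρ_xx : ∀ t a x, DifferentiableAt ℝ (deriv (fun z => ρ t a z)) x)
    (hρ_t_cont : Continuous fun p : ℝ × ℝ × ℝ => deriv (fun s => ρ s p.2.1 p.2.2) p.1)
    (hρ_a_cont : Continuous fun p : ℝ × ℝ × ℝ => deriv (fun b => ρ p.1 b p.2.2) p.2.1)
    (hρ_x_cont : Continuous fun p : ℝ × ℝ × ℝ => deriv (fun z => ρ p.1 p.2.1 z) p.2.2)
    {F : ℝ → ℝ → ℝ → ℝ}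
    (hF : ∀ t a x, F t a x = ρ t a x *
        (∫ y in (-1:ℝ)..1, ∫ b in (0:ℝ)..A, M a b * (φ (y - x) * (y - x)) * ρ t b y) -
      σ ^ 2 / 2 * deriv (fun z => ρ t a z) x)
    (hPDE : ∀ t ∈ Ioo (0:ℝ) T, ∀ a ∈ Ioo (0:ℝ) A, ∀ x ∈ Ioo (-1:ℝ) 1,
      deriv (fun s => ρ s a x) t + τ * deriv (fun b => ρ t b x) a +
        deriv (fun z => F t a z) x = 0)
    (hNoFlux : ∀ t ∈ Icc (0:ℝ) T, ∀ a ∈ Icc (0:ℝ) A, F t a (-1) = 0 ∧ F t a 1 = 0)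
    (hAgeZero : ∀ t ∈ Icc (0:ℝ) T, ∀ x ∈ Icc (-1:ℝ) 1,
      ρ t 0 x = μ x * ∫ y in (-1:ℝ)..1, ρ t A y)
    {t : ℝ} (ht : t ∈ Ioo 0 T) :
    ∫ a in (0:ℝ)..A, ∫ x in (-1:ℝ)..1, deriv (fun s => ρ s a x) t = 0 := by
  have hrenewal : ∫ x in (-1:ℝ)..1, ρ t 0 x = ∫ x in (-1:ℝ)..1, ρ t A x := by
    rw [integral_congr fun x hx => hAgeZero t (Ioo_subset_Icc_self ht) x
      (by rwa [uIcc_of_le (by norm_num)] at hx), intervalIntegral.integral_mul_const, hμ_mass,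
      one_mul]
  calc ∫ a in (0:ℝ)..A, ∫ x in (-1:ℝ)..1, deriv (fun s => ρ s a x) t
      = ∫ a in (0:ℝ)..A, -τ * ∫ x in (-1:ℝ)..1, deriv (fun b => ρ t b x) a :=
        integral_congr_Ioo_of_le hA fun a ha =>
          integral_timeDeriv_eq_neg_mul_integral_ageDeriv hA hφ hM_cont hρ_cont hρ_x hρ_xx
            hρ_t_cont hρ_a_cont hρ_x_cont hF hPDE hNoFlux ht ha
    _ = -τ * ((∫ x in (-1:ℝ)..1, ρ t A x) - ∫ x in (-1:ℝ)..1, ρ t 0 x) := by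
        rw [intervalIntegral.integral_const_mul,
          intervalIntegral_intervalIntegral_partialDeriv_eq_sub (u := fun a x => ρ t a x)
            (u' := fun a x => deriv (fun b => ρ t b x) a)
            (hρ_cont.comp₃ continuous_const continuous_fst continuous_snd)
            (hρ_a_cont.comp₃ continuous_const continuous_fst continuous_snd)
            fun a x => (hρ_a t a x).hasDerivAt]
    _ = 0 := by rw [hrenewal, sub_self, mul_zero]

theorem conservation_of_mass_general
    (T A τ σ : ℝ) (hA : 0 < A)
    (φ : ℝ → ℝ) (hφ : Continuous φ)
    (M : ℝ → ℝ → ℝ)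
    (hM_cont : ContinuousOn (fun p : ℝ × ℝ => M p.1 p.2)
      (Set.Icc 0 A ×ˢ Set.Icc 0 A))
    (μ : ℝ → ℝ)
    (hμ_mass : ∫ x in (-1:ℝ)..1, μ x = 1)
    (ρ : ℝ → ℝ → ℝ → ℝ)
    (hρ_cont : Continuous (fun p : ℝ × ℝ × ℝ => ρ p.1 p.2.1 p.2.2))
    (hρ_t : ∀ t a x, DifferentiableAt ℝ (fun s => ρ s a x) t)
    (hρ_a : ∀ t a x, DifferentiableAt ℝ (fun b => ρ t b x) a)
    (hρ_x : ∀ t a x, DifferentiableAt ℝ (fun z => ρ t a z) x)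
    (hρ_xx : ∀ t a x, DifferentiableAt ℝ (deriv (fun z => ρ t a z)) x)
    (hρ_t_cont : Continuous (fun p : ℝ × ℝ × ℝ => deriv (fun s => ρ s p.2.1 p.2.2) p.1))
    (hρ_a_cont : Continuous (fun p : ℝ × ℝ × ℝ => deriv (fun b => ρ p.1 b p.2.2) p.2.1))
    (hρ_x_cont : Continuous (fun p : ℝ × ℝ × ℝ => deriv (fun z => ρ p.1 p.2.1 z) p.2.2))
    (F : ℝ → ℝ → ℝ → ℝ)
    (hF : ∀ t a x, F t a x = ρ t a x *
        (∫ y in (-1:ℝ)..1, ∫ b in (0:ℝ)..A,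
          M a b * (φ (y - x) * (y - x)) * ρ t b y) -
      σ ^ 2 / 2 * deriv (fun z => ρ t a z) x)
    (hPDE : ∀ t ∈ Set.Ioo (0:ℝ) T, ∀ a ∈ Set.Ioo (0:ℝ) A, ∀ x ∈ Set.Ioo (-1:ℝ) 1,
      deriv (fun s => ρ s a x) t + τ * deriv (fun b => ρ t b x) a +
        deriv (fun z => F t a z) x = 0)
    (hNoFlux : ∀ t ∈ Set.Icc (0:ℝ) T, ∀ a ∈ Set.Icc (0:ℝ) A,
      F t a (-1) = 0 ∧ F t a 1 = 0)
    (hAgeZero : ∀ t ∈ Set.Icc (0:ℝ) T, ∀ x ∈ Set.Icc (-1:ℝ) 1,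
      ρ t 0 x = μ x * ∫ y in (-1:ℝ)..1, ρ t A y) :
    ∀ s ∈ Set.Icc (0:ℝ) T, ∀ t ∈ Set.Icc (0:ℝ) T,
      (∫ a in (0:ℝ)..A, ∫ x in (-1:ℝ)..1, ρ s a x) =
        ∫ a in (0:ℝ)..A, ∫ x in (-1:ℝ)..1, ρ t a x := by
  intro s hs t ht
  exact eq_of_hasDerivAt_eq_zero_on_Ioo
    (hasDerivAt_intervalIntegral_intervalIntegral hρ_cont hρ_t_cont
      fun s a x => (hρ_t s a x).hasDerivAt)
    (fun t ht => integral_integral_timeDeriv_eq_zero hA.le hφ hM_cont hμ_mass hρ_cont hρ_a hρ_x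
      hρ_xx hρ_t_cont hρ_a_cont hρ_x_cont hF hPDE hNoFlux hAgeZero ht) hs ht

/-- conservation of total mass for the age-structured mean-field PDE. -/
theorem conservation_of_mass
    (T A τ σ : ℝ) (hT : 0 < T) (hA : 0 < A) (hτ : 0 < τ)
    (φ : ℝ → ℝ) (hφ : Continuous φ)
    (M : ℝ → ℝ → ℝ)
    (hM_cont : ContinuousOn (fun p : ℝ × ℝ => M p.1 p.2)
      (Set.Icc 0 A ×ˢ Set.Icc 0 A))
    (μ : ℝ → ℝ) (hμ_int : IntegrableOn μ (Set.Icc (-1:ℝ) 1))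
    (hμ_mass : ∫ x in (-1:ℝ)..1, μ x = 1)
    (ρ : ℝ → ℝ → ℝ → ℝ)
    (hρ_cont : Continuous (fun p : ℝ × ℝ × ℝ => ρ p.1 p.2.1 p.2.2))
    (hρ_t : ∀ t a x, DifferentiableAt ℝ (fun s => ρ s a x) t)
    (hρ_a : ∀ t a x, DifferentiableAt ℝ (fun b => ρ t b x) a)
    (hρ_x : ∀ t a x, DifferentiableAt ℝ (fun z => ρ t a z) x)
    (hρ_xx : ∀ t a x, DifferentiableAt ℝ (deriv (fun z => ρ t a z)) x)
    (hρ_t_cont : Continuous (fun p : ℝ × ℝ × ℝ => deriv (fun s => ρ s p.2.1 p.2.2) p.1))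
    (hρ_a_cont : Continuous (fun p : ℝ × ℝ × ℝ => deriv (fun b => ρ p.1 b p.2.2) p.2.1))
    (hρ_x_cont : Continuous (fun p : ℝ × ℝ × ℝ => deriv (fun z => ρ p.1 p.2.1 z) p.2.2))
    (hρ_xx_cont : Continuous
      (fun p : ℝ × ℝ × ℝ => deriv (deriv (fun z => ρ p.1 p.2.1 z)) p.2.2))
    (F : ℝ → ℝ → ℝ → ℝ)
    (hF : ∀ t a x, F t a x = ρ t a x *
        (∫ y in (-1:ℝ)..1, ∫ b in (0:ℝ)..A,
          M a b * (φ (y - x) * (y - x)) * ρ t b y) -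
      σ ^ 2 / 2 * deriv (fun z => ρ t a z) x)
    (hPDE : ∀ t ∈ Set.Ioo (0:ℝ) T, ∀ a ∈ Set.Ioo (0:ℝ) A, ∀ x ∈ Set.Ioo (-1:ℝ) 1,
      deriv (fun s => ρ s a x) t + τ * deriv (fun b => ρ t b x) a +
        deriv (fun z => F t a z) x = 0)
    (hNoFlux : ∀ t ∈ Set.Icc (0:ℝ) T, ∀ a ∈ Set.Icc (0:ℝ) A,
      F t a (-1) = 0 ∧ F t a 1 = 0)
    (hAgeZero : ∀ t ∈ Set.Icc (0:ℝ) T, ∀ x ∈ Set.Icc (-1:ℝ) 1,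
      ρ t 0 x = μ x * ∫ y in (-1:ℝ)..1, ρ t A y) :
    ∀ s ∈ Set.Icc (0:ℝ) T, ∀ t ∈ Set.Icc (0:ℝ) T,
      (∫ a in (0:ℝ)..A, ∫ x in (-1:ℝ)..1, ρ s a x) =
        ∫ a in (0:ℝ)..A, ∫ x in (-1:ℝ)..1, ρ t a x :=
  conservation_of_mass_general T A τ σ hA φ hφ M hM_cont μ hμ_mass ρ hρ_cont hρ_t hρ_a hρ_x hρ_xx
    hρ_t_cont hρ_a_cont hρ_x_cont F hF hPDE hNoFlux hAgeZero
end

section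
/- Let U = (−1,1), A > 0, σ ∈ ℝ, let φ : ℝ → ℝ be continuous, and let M : [0,A] → ℝ be continuous. Let ρ : [0,T]×[0,A]×[−1,1] → ℝ be continuous with continuous partial derivatives ∂_t ρ, ∂_x ρ, ∂_{xx} ρ, and suppose that for every a ∈ (0,A) it satisfies pointwise the no-ageing (τ = 0) equation ∂_t ρ(t,a,x) + ∂_x ( ρ(t,a,x) ∫_{−1}^{1} φ(y−x)(y−x) u(t,y) dy ) − (σ²/2) ∂_{xx} ρ(t,a,x) = 0, where u(t,x) = ∫_0^A M(b) ρ(t,b,x) db. Then u itself satisfies pointwise the classical mean-field equation ∂_t u(t,x) + ∂_x ( u(t,x) ∫_{−1}^{1} φ(y−x)(y−x) u(t,y) dy ) − (σ²/2) ∂_{xx} u(t,x) = 0 on (0,T)×(−1,1). -/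
/-!
Since `M` depends only on the age of the influencing individual, all age classes are
transported by the same velocity `V(t,x) = ∫ φ(y - x) (y - x) u(t,y) dy`, so the equation for
`ρ(·, a, ·)` is linear in `ρ` with coefficients independent of `a`. Multiplying it by `M a` and
integrating over the ages, differentiation under the integral sign turns it into the same
equation for `u`. The one delicate point is that `V` is differentiable although `φ` is merely
continuous: an integration by parts against an antiderivative of `w ↦ φ w * w` moves the
derivative onto `u`, which is `C¹` in `x`.
-/

open MeasureTheory Set
open scoped Interval

namespace intervalIntegral

variable {E : Type*} [NormedAddCommGroup E] [NormedSpace ℝ E]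

theorem hasDerivAt_integral_of_continuousOn {a b : ℝ} {F F' : ℝ → ℝ → E}
    (hF : ∀ s, ContinuousOn (F s) [[a, b]])
    (hF' : ContinuousOn (fun p : ℝ × ℝ => F' p.1 p.2) (univ ×ˢ [[a, b]]))
    (hd : ∀ s, ∀ w ∈ [[a, b]], HasDerivAt (F · w) (F' s w) s) (s₀ : ℝ) :
    HasDerivAt (fun s => ∫ w in a..b, F s w) (∫ w in a..b, F' s₀ w) s₀ := by
  obtain ⟨C, hC⟩ := ((isCompact_closedBall s₀ 1).prod isCompact_uIcc).exists_bound_of_continuousOn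
    (hF'.mono fun p hp => ⟨trivial, hp.2⟩)
  have hF's₀ : ContinuousOn (F' s₀) [[a, b]] :=
    hF'.comp (Continuous.continuousOn (by fun_prop : Continuous fun w : ℝ => (s₀, w)))
      fun w hw => ⟨trivial, hw⟩
  refine (hasDerivAt_integral_of_dominated_loc_of_deriv_le (bound := fun _ => C)
    (Metric.ball_mem_nhds s₀ one_pos) ?_ ((hF s₀).intervalIntegrable)
    ((hF's₀.mono uIoc_subset_uIcc).aestronglyMeasurable measurableSet_uIoc) ?_
    intervalIntegrable_const ?_).2
  · exact .of_forall fun s =>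
      ((hF s).mono uIoc_subset_uIcc).aestronglyMeasurable measurableSet_uIoc
  · exact .of_forall fun w hw s hs =>
      hC (s, w) ⟨Metric.ball_subset_closedBall hs, uIoc_subset_uIcc hw⟩
  · exact .of_forall fun w hw s _ => hd s w (uIoc_subset_uIcc hw)

theorem hasDerivAt_integral_mul_of_continuous {a b : ℝ} {M : ℝ → ℝ}
    (hM : ContinuousOn M [[a, b]]) {F F' : ℝ → ℝ → ℝ}
    (hF : Continuous fun p : ℝ × ℝ => F p.1 p.2) (hF' : Continuous fun p : ℝ × ℝ => F' p.1 p.2)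
    (hd : ∀ s w, HasDerivAt (F · w) (F' s w) s) (s₀ : ℝ) :
    HasDerivAt (fun s => ∫ w in a..b, M w * F s w) (∫ w in a..b, M w * F' s₀ w) s₀ :=
  hasDerivAt_integral_of_continuousOn
    (fun s => hM.mul (hF.comp (by fun_prop : Continuous fun w : ℝ => (s, w))).continuousOn)
    ((hM.comp continuous_snd.continuousOn fun _ hp => hp.2).mul hF'.continuousOn)
    (fun s w _ => (hd s w).const_mul (M w)) s₀

theorem differentiable_integral_comp_sub_mul {k f f' : ℝ → ℝ} (hk : Continuous k)
    (hf : ∀ y, HasDerivAt f (f' y) y) (hf' : Continuous f') (a b : ℝ) :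
    Differentiable ℝ fun z => ∫ y in a..b, k (y - z) * f y := by
  set K : ℝ → ℝ := fun w => ∫ v in (0 : ℝ)..w, k v
  have hK : ∀ w, HasDerivAt K (k w) w := fun w => (hk.integral_hasStrictDerivAt 0 w).hasDerivAt
  have hK_shift : ∀ z y, HasDerivAt (fun y => K (y - z)) (k (y - z)) y := fun z y => by
    simpa using (hK (y - z)).comp_sub_const y z
  have hK_diff : Differentiable ℝ K := fun w => (hK w).differentiableAt
  have by_parts : ∀ z, ∫ y in a..b, k (y - z) * f y
      = f b * K (b - z) - f a * K (a - z) - ∫ y in a..b, f' y * K (y - z) := fun z => by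
    simp_rw [mul_comm (k _) (f _)]
    exact integral_mul_deriv_eq_deriv_mul (fun y _ => hf y) (fun y _ => hK_shift z y)
      (hf'.intervalIntegrable a b) ((hk.comp (by fun_prop)).intervalIntegrable a b)
  have h_rest : Differentiable ℝ fun z => ∫ y in a..b, f' y * K (y - z) := fun z =>
    (hasDerivAt_integral_mul_of_continuous (F' := fun s w => -k (w - s))
      hf'.continuousOn (by fun_prop) (by fun_prop)
      (fun s w => by simpa using (hK (w - s)).comp_const_sub w s) z).differentiableAt
  simp_rw [by_parts]
  fun_prop

theorem integral_add_mul_add_mul_sub_const_mul {a b c d e : ℝ} {f₁ f₂ f₃ f₄ : ℝ → ℝ}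
    (h₁ : IntervalIntegrable f₁ volume a b) (h₂ : IntervalIntegrable f₂ volume a b)
    (h₃ : IntervalIntegrable f₃ volume a b) (h₄ : IntervalIntegrable f₄ volume a b) :
    (∫ x in a..b, f₁ x) + ((∫ x in a..b, f₂ x) * c + (∫ x in a..b, f₃ x) * d)
        - e * ∫ x in a..b, f₄ x
      = ∫ x in a..b, f₁ x + (f₂ x * c + f₃ x * d) - e * f₄ x := by
  rw [integral_sub (h₁.add ((h₂.mul_const c).add (h₃.mul_const d))) (h₄.const_mul e),
    integral_add h₁ ((h₂.mul_const c).add (h₃.mul_const d)),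
    integral_add (h₂.mul_const c) (h₃.mul_const d), integral_mul_const, integral_mul_const,
    integral_const_mul]

theorem integral_eq_zero_of_eqOn_Ioo {f : ℝ → E} {a b : ℝ} (hab : a ≤ b)
    (hf : EqOn f 0 (Ioo a b)) : ∫ x in a..b, f x = 0 := by
  rw [integral_of_le hab, integral_Ioc_eq_integral_Ioo]
  exact setIntegral_eq_zero_of_forall_eq_zero hf

end intervalIntegral

open intervalIntegral

theorem no_ageing_effective_density_meanfield_general
    (T A σ : ℝ) (hA : 0 < A)
    (φ : ℝ → ℝ) (hφ : Continuous φ)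
    (M : ℝ → ℝ) (hM_cont : ContinuousOn M (Set.Icc (0:ℝ) A))
    (ρ : ℝ → ℝ → ℝ → ℝ)
    (hρ_cont : Continuous (fun p : ℝ × ℝ × ℝ => ρ p.1 p.2.1 p.2.2))
    (hρ_t : ∀ t a x, DifferentiableAt ℝ (fun s => ρ s a x) t)
    (hρ_x : ∀ t a x, DifferentiableAt ℝ (fun z => ρ t a z) x)
    (hρ_xx : ∀ t a x, DifferentiableAt ℝ (deriv (fun z => ρ t a z)) x)
    (hρ_t_cont : Continuous (fun p : ℝ × ℝ × ℝ => deriv (fun s => ρ s p.2.1 p.2.2) p.1))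
    (hρ_x_cont : Continuous (fun p : ℝ × ℝ × ℝ => deriv (fun z => ρ p.1 p.2.1 z) p.2.2))
    (hρ_xx_cont : Continuous
      (fun p : ℝ × ℝ × ℝ => deriv (deriv (fun z => ρ p.1 p.2.1 z)) p.2.2))
    (u : ℝ → ℝ → ℝ)
    (hu : ∀ t x, u t x = ∫ b in (0:ℝ)..A, M b * ρ t b x)
    (hPDE : ∀ a ∈ Set.Ioo (0:ℝ) A, ∀ t ∈ Set.Ioo (0:ℝ) T, ∀ x ∈ Set.Ioo (-1:ℝ) 1,
      deriv (fun s => ρ s a x) t +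
        deriv (fun z => ρ t a z *
          ∫ y in (-1:ℝ)..1, φ (y - z) * (y - z) * u t y) x -
        σ ^ 2 / 2 * deriv (deriv (fun z => ρ t a z)) x = 0) :
    ∀ t ∈ Set.Ioo (0:ℝ) T, ∀ x ∈ Set.Ioo (-1:ℝ) 1,
      deriv (fun s => u s x) t +
        deriv (fun z => u t z *
          ∫ y in (-1:ℝ)..1, φ (y - z) * (y - z) * u t y) x -
        σ ^ 2 / 2 * deriv (deriv (fun z => u t z)) x = 0 := by
  intro t ht x hx
  have hM : ContinuousOn M [[0, A]] := by rwa [uIcc_of_le hA.le]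
  have hu_t : HasDerivAt (fun s => u s x) (∫ b in 0..A, M b * deriv (ρ · b x) t) t := by
    simp only [hu]
    exact hasDerivAt_integral_mul_of_continuous hM (by fun_prop)
      (hρ_t_cont.comp (f := fun p : ℝ × ℝ => (p.1, p.2, x)) (by fun_prop))
      (fun s b => (hρ_t s b x).hasDerivAt) t
  have hu_x : ∀ z, HasDerivAt (u t) (∫ b in 0..A, M b * deriv (ρ t b ·) z) z := fun z => by
    simp only [funext (hu t)]
    exact hasDerivAt_integral_mul_of_continuous hM (by fun_prop)
      (hρ_x_cont.comp (f := fun p : ℝ × ℝ => (t, p.2, p.1)) (by fun_prop))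
      (fun z b => (hρ_x t b z).hasDerivAt) z
  have hu_xx : ∀ z, HasDerivAt (deriv (u t))
      (∫ b in 0..A, M b * deriv (deriv (ρ t b ·)) z) z := fun z => by
    rw [funext fun z => (hu_x z).deriv]
    exact hasDerivAt_integral_mul_of_continuous hM
      (hρ_x_cont.comp (f := fun p : ℝ × ℝ => (t, p.2, p.1)) (by fun_prop))
      (hρ_xx_cont.comp (f := fun p : ℝ × ℝ => (t, p.2, p.1)) (by fun_prop))
      (fun z b => (hρ_xx t b z).hasDerivAt) z
  have hV : DifferentiableAt ℝ (fun z => ∫ y in (-1:ℝ)..1, φ (y - z) * (y - z) * u t y) x :=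
    differentiable_integral_comp_sub_mul (k := fun w => φ w * w) (by fun_prop)
      (fun z => (hu_x z).differentiableAt.hasDerivAt)
      (continuous_iff_continuousAt.2 fun z => (hu_xx z).continuousAt) (-1) 1 x
  have hint : ∀ g : ℝ × ℝ × ℝ → ℝ, Continuous g →
      IntervalIntegrable (fun b => M b * g (t, b, x)) volume 0 A := fun g hg =>
    (hM.mul (hg.comp (by fun_prop : Continuous fun b : ℝ => (t, b, x))).continuousOn)
      |>.intervalIntegrable
  rw [hu_t.deriv, deriv_fun_mul (hu_x x).differentiableAt hV, (hu_x x).deriv, (hu_xx x).deriv,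
    hu t x, integral_add_mul_add_mul_sub_const_mul (hint _ hρ_t_cont) (hint _ hρ_x_cont)
      (hint _ hρ_cont) (hint _ hρ_xx_cont)]
  refine integral_eq_zero_of_eqOn_Ioo hA.le fun b hb => ?_
  have hρ_b := hPDE b hb t ht x hx
  rw [deriv_fun_mul (hρ_x t b x) hV] at hρ_b
  simp only [Pi.zero_apply]
  linear_combination M b * hρ_b

/-- in the no-ageing regime (τ = 0) with kernel M(a,b) = M(b), the
effective density u(t,x) = ∫₀^A M(b) ρ(t,b,x) db satisfies the classical
mean-field equation. -/
theorem no_ageing_effective_density_meanfield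
    (T A σ : ℝ) (hT : 0 < T) (hA : 0 < A)
    (φ : ℝ → ℝ) (hφ : Continuous φ)
    (M : ℝ → ℝ) (hM_cont : ContinuousOn M (Set.Icc (0:ℝ) A))
    (ρ : ℝ → ℝ → ℝ → ℝ)
    (hρ_cont : Continuous (fun p : ℝ × ℝ × ℝ => ρ p.1 p.2.1 p.2.2))
    (hρ_t : ∀ t a x, DifferentiableAt ℝ (fun s => ρ s a x) t)
    (hρ_x : ∀ t a x, DifferentiableAt ℝ (fun z => ρ t a z) x)
    (hρ_xx : ∀ t a x, DifferentiableAt ℝ (deriv (fun z => ρ t a z)) x)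
    (hρ_t_cont : Continuous (fun p : ℝ × ℝ × ℝ => deriv (fun s => ρ s p.2.1 p.2.2) p.1))
    (hρ_x_cont : Continuous (fun p : ℝ × ℝ × ℝ => deriv (fun z => ρ p.1 p.2.1 z) p.2.2))
    (hρ_xx_cont : Continuous
      (fun p : ℝ × ℝ × ℝ => deriv (deriv (fun z => ρ p.1 p.2.1 z)) p.2.2))
    (u : ℝ → ℝ → ℝ)
    (hu : ∀ t x, u t x = ∫ b in (0:ℝ)..A, M b * ρ t b x)
    (hPDE : ∀ a ∈ Set.Ioo (0:ℝ) A, ∀ t ∈ Set.Ioo (0:ℝ) T, ∀ x ∈ Set.Ioo (-1:ℝ) 1,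
      deriv (fun s => ρ s a x) t +
        deriv (fun z => ρ t a z *
          ∫ y in (-1:ℝ)..1, φ (y - z) * (y - z) * u t y) x -
        σ ^ 2 / 2 * deriv (deriv (fun z => ρ t a z)) x = 0) :
    ∀ t ∈ Set.Ioo (0:ℝ) T, ∀ x ∈ Set.Ioo (-1:ℝ) 1,
      deriv (fun s => u s x) t +
        deriv (fun z => u t z *
          ∫ y in (-1:ℝ)..1, φ (y - z) * (y - z) * u t y) x -
        σ ^ 2 / 2 * deriv (deriv (fun z => u t z)) x = 0 :=
  no_ageing_effective_density_meanfield_general T A σ hA φ hφ M hM_cont ρ hρ_cont hρ_t hρ_x hρ_xx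
    hρ_t_cont hρ_x_cont hρ_xx_cont u hu hPDE
end

section
/- Let U = (−1,1), τ > 0, σ ∈ ℝ, let φ : ℝ → ℝ and μ : [−1,1] → ℝ be continuous, let M : [0,1]² → ℝ be continuous, let d : [0,1) → ℝ be continuous, and let π : [0,1] → ℝ be continuously differentiable with π'(a) = −d(a) π(a) for a ∈ (0,1) and π(0) = ∫_0^1 d(a) π(a) da (a stationary McKendrick age profile with compact support in [0,1]). Define M'(a,b) = M(a,b) π(b) and let q : [0,T]×[0,1]×[−1,1] → ℝ be continuous with continuous partial derivatives ∂_t q, ∂_a q, ∂_x q, ∂_{xx} q, satisfying pointwise ∂_t q + τ ∂_a q + ∂_x F[q] = 0 with flux F[q](t,a,x) = q(t,a,x) ∫_{−1}^{1} ∫_0^1 M'(a,b) φ(y−x)(y−x) q(t,b,y) db dy − (σ²/2) ∂_x q(t,a,x), the no-flux conditions F[q](t,a,±1) = 0, the age-zero condition q(t,0,x) = μ(x) ∫_{−1}^{1} q(t,1,y) dy, and suppose ∫_{−1}^{1} q(t,1,y) dy = 1 for all t. Then ρ(t,a,x) := q(t,a,x) π(a) satisfies pointwise the McKendrick-aged system: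 ∂_t ρ + τ ∂_a ρ + ∂_x F̃[ρ] = −τ d(a) ρ, where F̃[ρ](t,a,x) = ρ(t,a,x) ∫_{−1}^{1} ∫_0^1 M(a,b) φ(y−x)(y−x) ρ(t,b,y) db dy − (σ²/2) ∂_x ρ(t,a,x), together with F̃[ρ](t,a,±1) = 0 and ρ(t,0,x) = μ(x) ∫_0^1 d(a) π(a) da. -/
open MeasureTheory intervalIntegral

/-- from a solution q of the uniform-age-profile model with kernel
M'(a,b) = M(a,b)π(b), the function ρ(t,a,x) = q(t,a,x)π(a) solves the
McKendrick-aged opinion model with death rate d. -/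
theorem mckendrick_correspondence
    (T τ σ : ℝ) (hT : 0 < T) (hτ : 0 < τ)
    (φ : ℝ → ℝ) (hφ : Continuous φ)
    (μ : ℝ → ℝ) (hμ_cont : Continuous μ)
    (M : ℝ → ℝ → ℝ)
    (hM_cont : ContinuousOn (fun p : ℝ × ℝ => M p.1 p.2)
      (Set.Icc 0 1 ×ˢ Set.Icc 0 1))
    (d : ℝ → ℝ) (hd_cont : ContinuousOn d (Set.Ico (0:ℝ) 1))
    (π : ℝ → ℝ) (hπ_diff : ContDiffOn ℝ 1 π (Set.Icc (0:ℝ) 1))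
    (hπ_ode : ∀ a ∈ Set.Ioo (0:ℝ) 1, HasDerivAt π (-(d a * π a)) a)
    (hπ_zero : π 0 = ∫ a in (0:ℝ)..1, d a * π a)
    (q : ℝ → ℝ → ℝ → ℝ)
    (hq_cont : Continuous (fun p : ℝ × ℝ × ℝ => q p.1 p.2.1 p.2.2))
    (hq_t : ∀ t a x, DifferentiableAt ℝ (fun s => q s a x) t)
    (hq_a : ∀ t a x, DifferentiableAt ℝ (fun b => q t b x) a)
    (hq_x : ∀ t a x, DifferentiableAt ℝ (fun z => q t a z) x)
    (hq_xx : ∀ t a x, DifferentiableAt ℝ (deriv (fun z => q t a z)) x)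
    (hq_t_cont : Continuous (fun p : ℝ × ℝ × ℝ => deriv (fun s => q s p.2.1 p.2.2) p.1))
    (hq_a_cont : Continuous (fun p : ℝ × ℝ × ℝ => deriv (fun b => q p.1 b p.2.2) p.2.1))
    (hq_x_cont : Continuous (fun p : ℝ × ℝ × ℝ => deriv (fun z => q p.1 p.2.1 z) p.2.2))
    (hq_xx_cont : Continuous
      (fun p : ℝ × ℝ × ℝ => deriv (deriv (fun z => q p.1 p.2.1 z)) p.2.2))
    (F : ℝ → ℝ → ℝ → ℝ)
    (hF : ∀ t a x, F t a x = q t a x *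
        (∫ y in (-1:ℝ)..1, ∫ b in (0:ℝ)..1,
          (M a b * π b) * (φ (y - x) * (y - x)) * q t b y) -
      σ ^ 2 / 2 * deriv (fun z => q t a z) x)
    (hqPDE : ∀ t ∈ Set.Ioo (0:ℝ) T, ∀ a ∈ Set.Ioo (0:ℝ) 1, ∀ x ∈ Set.Ioo (-1:ℝ) 1,
      deriv (fun s => q s a x) t + τ * deriv (fun b => q t b x) a +
        deriv (fun z => F t a z) x = 0)
    (hqNoFlux : ∀ t ∈ Set.Icc (0:ℝ) T, ∀ a ∈ Set.Icc (0:ℝ) 1,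
      F t a (-1) = 0 ∧ F t a 1 = 0)
    (hqAgeZero : ∀ t ∈ Set.Icc (0:ℝ) T, ∀ x ∈ Set.Icc (-1:ℝ) 1,
      q t 0 x = μ x * ∫ y in (-1:ℝ)..1, q t 1 y)
    (hqAgeOne_mass : ∀ t ∈ Set.Icc (0:ℝ) T, ∫ y in (-1:ℝ)..1, q t 1 y = 1)
    (ρ : ℝ → ℝ → ℝ → ℝ)
    (hρ : ∀ t a x, ρ t a x = q t a x * π a)
    (Ftilde : ℝ → ℝ → ℝ → ℝ)
    (hFtilde : ∀ t a x, Ftilde t a x = ρ t a x *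
        (∫ y in (-1:ℝ)..1, ∫ b in (0:ℝ)..1,
          M a b * (φ (y - x) * (y - x)) * ρ t b y) -
      σ ^ 2 / 2 * deriv (fun z => ρ t a z) x) :
    (∀ t ∈ Set.Ioo (0:ℝ) T, ∀ a ∈ Set.Ioo (0:ℝ) 1, ∀ x ∈ Set.Ioo (-1:ℝ) 1,
      deriv (fun s => ρ s a x) t + τ * deriv (fun b => ρ t b x) a +
        deriv (fun z => Ftilde t a z) x = -(τ * d a * ρ t a x)) ∧
    (∀ t ∈ Set.Icc (0:ℝ) T, ∀ a ∈ Set.Icc (0:ℝ) 1,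
      Ftilde t a (-1) = 0 ∧ Ftilde t a 1 = 0) ∧
    (∀ t ∈ Set.Icc (0:ℝ) T, ∀ x ∈ Set.Icc (-1:ℝ) 1,
      ρ t 0 x = μ x * ∫ a in (0:ℝ)..1, d a * π a) := by
  -- key: Ftilde t a x = π a * F t a x
  have hF2 : ∀ t a x, Ftilde t a x = π a * F t a x := by
    intro t a x
    have hI : (∫ y in (-1:ℝ)..1, ∫ b in (0:ℝ)..1,
        M a b * (φ (y - x) * (y - x)) * ρ t b y) =
        ∫ y in (-1:ℝ)..1, ∫ b in (0:ℝ)..1,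
        (M a b * π b) * (φ (y - x) * (y - x)) * q t b y := by
      apply intervalIntegral.integral_congr
      intro y _
      apply intervalIntegral.integral_congr
      intro b _
      simp only [hρ]; ring
    have hz : (fun z => ρ t a z) = fun z => q t a z * π a :=
      funext fun z => hρ t a z
    rw [hFtilde, hF, hI, hρ, hz, deriv_mul_const (hq_x t a x)]
    ring
  refine ⟨?_, ?_, ?_⟩
  · intro t ht a ha x hx
    have hp := hqPDE t ht a ha x hx
    have hdt : deriv (fun s => ρ s a x) t = deriv (fun s => q s a x) t * π a := by
      have : (fun s => ρ s a x) = fun s => q s a x * π a := funext fun s => hρ s a x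
      rw [this, deriv_mul_const (hq_t t a x)]
    have hda : deriv (fun b => ρ t b x) a =
        deriv (fun b => q t b x) a * π a + q t a x * -(d a * π a) := by
      have : (fun b => ρ t b x) = fun b => q t b x * π b := funext fun b => hρ t b x
      rw [this]
      exact ((hq_a t a x).hasDerivAt.mul (hπ_ode a ha)).deriv
    have hdx : deriv (fun z => Ftilde t a z) x = π a * deriv (fun z => F t a z) x := by
      have : (fun z => Ftilde t a z) = fun z => π a * F t a z :=
        funext fun z => hF2 t a z
      rw [this, deriv_const_mul_field]
    rw [hdt, hda, hdx, hρ]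
    linear_combination π a * hp
  · intro t ht a ha
    obtain ⟨h1, h2⟩ := hqNoFlux t ht a ha
    constructor <;> simp [hF2, h1, h2]
  · intro t ht x hx
    rw [hρ, hqAgeZero t ht x hx, hqAgeOne_mass t ht, hπ_zero]
    ring
end
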